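/- arXiv:1309.1349 — 6 statements merged into one kernel-verified Lean document; each statement's English description precedes it below -/
import Mathlib

section
/- Let G = (V,E) be a weakly connected oriented graph with incidence matrix A, Laplacian L = AᵀA, and maximum degree d_max, let b ∈ ℝ^{E}, and let 0 < τ < 1/d_max. Then the gradient descent iteration x(k+1) = (I − τL) x(k) + τ Aᵀ b with initial condition x(0) = 0 converges, as k → ∞, to the optimal least-squares solution x⋆, i.e. to the unique minimum-Euclidean-norm minimizer of z ↦ ‖A z − b‖₂². -/
/-!
Let `M = 1 - τ AᵀA` and `e k = x k - x⋆`. The normal equations `Aᵀ (A x⋆ - b) = 0` make `x⋆`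
a fixed point of the iteration, so `e (k + 1) = M (e k)`. Expanding,
`‖M w‖² = ‖w‖² - 2τ ‖A w‖² + τ² ‖Aᵀ A w‖²`, and the Schur test bounds `‖Aᵀ‖²` by
(max row sum)·(max column sum) `= 2 d_max`, so `‖M w‖² ≤ ‖w‖² - τ (2 - 2τ d_max) ‖A w‖²`.
Minimality of `‖x⋆‖` forces `x⋆ ⊥ ker A`; `M` preserves `(ker A)ᗮ`, on which `‖A w‖² ≥ μ ‖w‖²`
for some `μ > 0` by compactness of the unit sphere. Hence `‖e k‖²` decays geometrically.
-/

open Matrix Filter Topology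

namespace Matrix

variable {m n : Type*} [Fintype n]

lemma dotProduct_self_nonneg (v : n → ℝ) : 0 ≤ v ⬝ᵥ v :=
  Finset.sum_nonneg fun i _ => mul_self_nonneg (v i)

lemma sum_sq_eq_dotProduct_self (v : n → ℝ) : ∑ i, v i ^ 2 = v ⬝ᵥ v := by
  simp only [dotProduct, sq]

lemma dotProduct_add_smul_self (a c : n → ℝ) (t : ℝ) :
    (a + t • c) ⬝ᵥ (a + t • c) = a ⬝ᵥ a + 2 * t * (a ⬝ᵥ c) + t ^ 2 * (c ⬝ᵥ c) := by
  simp only [add_dotProduct, dotProduct_add, smul_dotProduct, dotProduct_smul, smul_eq_mul,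
    dotProduct_comm c a]
  ring

lemma dotProduct_eq_zero_of_forall_le {a c : n → ℝ}
    (h : ∀ t : ℝ, a ⬝ᵥ a ≤ (a + t • c) ⬝ᵥ (a + t • c)) : a ⬝ᵥ c = 0 := by
  set p := a ⬝ᵥ c
  set s := c ⬝ᵥ c
  have hs : 0 ≤ s := dotProduct_self_nonneg c
  have ht := h (-p / (s + 1))
  rw [dotProduct_add_smul_self] at ht
  have hs1 : 0 < s + 1 := by linarith
  field_simp at ht
  nlinarith [sq_nonneg p, mul_nonneg hs (sq_nonneg p)]

lemma tendsto_nhds_zero_of_dotProduct_self {ι : Type*} {l : Filter ι} {e : ι → n → ℝ}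
    (h : Tendsto (fun k => e k ⬝ᵥ e k) l (𝓝 0)) : Tendsto e l (𝓝 0) := by
  rw [tendsto_pi_nhds]
  intro i
  have hsqrt : Tendsto (fun k => √(e k ⬝ᵥ e k)) l (𝓝 0) := by
    simpa using h.sqrt
  refine squeeze_zero_norm (fun k => Real.abs_le_sqrt ?_) hsqrt
  rw [← sum_sq_eq_dotProduct_self]
  exact Finset.single_le_sum (fun j _ => sq_nonneg (e k j)) (Finset.mem_univ i)

lemma tendsto_nhds_zero_of_dotProduct_self_le_mul {e : ℕ → n → ℝ} {q : ℝ} (hq : q < 1)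
    (h : ∀ k, e (k + 1) ⬝ᵥ e (k + 1) ≤ q * (e k ⬝ᵥ e k)) : Tendsto e atTop (𝓝 0) := by
  set q' := max q 0
  have hbound : ∀ k, e k ⬝ᵥ e k ≤ q' ^ k * (e 0 ⬝ᵥ e 0) := by
    intro k
    induction k with
    | zero => simp
    | succ k ih =>
      calc e (k + 1) ⬝ᵥ e (k + 1) ≤ q' * (e k ⬝ᵥ e k) :=
            (h k).trans (mul_le_mul_of_nonneg_right (le_max_left q 0) (dotProduct_self_nonneg _))
        _ ≤ q' * (q' ^ k * (e 0 ⬝ᵥ e 0)) := mul_le_mul_of_nonneg_left ih (le_max_right q 0)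
        _ = q' ^ (k + 1) * (e 0 ⬝ᵥ e 0) := by ring
  have hgeom : Tendsto (fun k => q' ^ k * (e 0 ⬝ᵥ e 0)) atTop (𝓝 0) := by
    simpa using (tendsto_pow_atTop_nhds_zero_of_lt_one (le_max_right q 0)
      (max_lt hq one_pos)).mul_const (e 0 ⬝ᵥ e 0)
  exact tendsto_nhds_zero_of_dotProduct_self <|
    squeeze_zero (fun k => dotProduct_self_nonneg _) hbound hgeom

/-- Schur test: `‖Aᵀ‖₂² ≤ ‖A‖₁ ‖A‖_∞`. -/
lemma transpose_mulVec_dotProduct_self_le [Fintype m] {A : Matrix m n ℝ} {R C : ℝ}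
    (hC : 0 ≤ C) (hrow : ∀ e, ∑ i, |A e i| ≤ R) (hcol : ∀ i, ∑ e, |A e i| ≤ C) (u : m → ℝ) :
    Aᵀ *ᵥ u ⬝ᵥ Aᵀ *ᵥ u ≤ C * R * (u ⬝ᵥ u) := by
  have hentry : ∀ i, (Aᵀ *ᵥ u) i ^ 2 ≤ C * ∑ e, |A e i| * u e ^ 2 := fun i =>
    calc (Aᵀ *ᵥ u) i ^ 2 = (∑ e, A e i * u e) ^ 2 := rfl
      _ ≤ (∑ e, |A e i|) * ∑ e, |A e i| * u e ^ 2 :=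
          Finset.sum_sq_le_sum_mul_sum_of_sq_le_mul _ (fun e _ => abs_nonneg _)
            (fun e _ => by positivity) fun e _ => by rw [← mul_assoc, ← sq, sq_abs, mul_pow]
      _ ≤ C * ∑ e, |A e i| * u e ^ 2 :=
          mul_le_mul_of_nonneg_right (hcol i) (by positivity)
  calc Aᵀ *ᵥ u ⬝ᵥ Aᵀ *ᵥ u = ∑ i, (Aᵀ *ᵥ u) i ^ 2 := (sum_sq_eq_dotProduct_self _).symm
    _ ≤ ∑ i, C * ∑ e, |A e i| * u e ^ 2 := Finset.sum_le_sum fun i _ => hentry i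
    _ = C * ∑ e, (∑ i, |A e i|) * u e ^ 2 := by
        rw [← Finset.mul_sum, Finset.sum_comm]
        simp only [Finset.sum_mul]
    _ ≤ C * ∑ e, R * u e ^ 2 := by
        gcongr with e
        exact hrow e
    _ = C * R * (u ⬝ᵥ u) := by
        rw [← Finset.mul_sum, sum_sq_eq_dotProduct_self, mul_assoc]

def kerOrthogonal (A : Matrix m n ℝ) : Submodule ℝ (n → ℝ) where
  carrier := {w | ∀ u, A *ᵥ u = 0 → w ⬝ᵥ u = 0}
  add_mem' hv hw u hu := by rw [add_dotProduct, hv u hu, hw u hu, add_zero]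
  zero_mem' u _ := zero_dotProduct u
  smul_mem' c w hw u hu := by rw [smul_dotProduct, hw u hu, smul_zero]

variable {A : Matrix m n ℝ}

lemma mem_kerOrthogonal {w : n → ℝ} :
    w ∈ kerOrthogonal A ↔ ∀ u, A *ᵥ u = 0 → w ⬝ᵥ u = 0 := Iff.rfl

lemma isClosed_kerOrthogonal : IsClosed (kerOrthogonal A : Set (n → ℝ)) := by
  have : (kerOrthogonal A : Set (n → ℝ)) = ⋂ u ∈ {u | A *ᵥ u = 0}, {w | w ⬝ᵥ u = 0} := by
    ext w
    simp only [SetLike.mem_coe, mem_kerOrthogonal, Set.mem_iInter, Set.mem_ofPred_eq]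
  rw [this]
  exact isClosed_biInter fun u _ =>
    isClosed_eq (continuous_id.dotProduct continuous_const) continuous_const

lemma eq_zero_of_mem_kerOrthogonal {w : n → ℝ} (hw : w ∈ kerOrthogonal A)
    (hAw : A *ᵥ w = 0) : w = 0 :=
  dotProduct_self_eq_zero.1 (hw w hAw)

lemma isCompact_kerOrthogonal_inter_unitSphere :
    IsCompact ((kerOrthogonal A : Set (n → ℝ)) ∩ {w | w ⬝ᵥ w = 1}) := by
  refine (isCompact_closedBall (0 : n → ℝ) 1).of_isClosed_subset
    (isClosed_kerOrthogonal.inter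
      (isClosed_eq (continuous_id.dotProduct continuous_id) continuous_const)) ?_
  intro w hw
  rw [Metric.mem_closedBall, dist_zero_right, pi_norm_le_iff_of_nonneg zero_le_one]
  intro i
  rw [Real.norm_eq_abs, ← sq_le_one_iff_abs_le_one, ← hw.2, ← sum_sq_eq_dotProduct_self]
  exact Finset.single_le_sum (fun j _ => sq_nonneg (w j)) (Finset.mem_univ i)

lemma exists_pos_mul_le_dotProduct_mulVec [Fintype m] (A : Matrix m n ℝ) :
    ∃ μ > 0, ∀ w ∈ kerOrthogonal A, μ * (w ⬝ᵥ w) ≤ A *ᵥ w ⬝ᵥ A *ᵥ w := by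
  set f : (n → ℝ) → ℝ := fun w => A *ᵥ w ⬝ᵥ A *ᵥ w
  set S := (kerOrthogonal A : Set (n → ℝ)) ∩ {w | w ⬝ᵥ w = 1}
  have hf : Continuous f := by
    have hA : Continuous fun w : n → ℝ => A *ᵥ w := continuous_const.matrix_mulVec continuous_id
    exact hA.dotProduct hA
  obtain ⟨μ, hμ, hμS⟩ : ∃ μ > 0, ∀ w ∈ S, μ ≤ f w := by
    rcases S.eq_empty_or_nonempty with hSe | hSne
    · exact ⟨1, one_pos, by simp [hSe]⟩
    obtain ⟨w₀, hw₀, hmin⟩ :=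
      isCompact_kerOrthogonal_inter_unitSphere.exists_isMinOn hSne hf.continuousOn
    refine ⟨f w₀, (dotProduct_self_nonneg _).lt_of_ne fun h => ?_, fun w hw => hmin hw⟩
    have hw₀1 : w₀ ⬝ᵥ w₀ = 1 := hw₀.2
    rw [eq_zero_of_mem_kerOrthogonal hw₀.1 (dotProduct_self_eq_zero.1 h.symm),
      dotProduct_zero] at hw₀1
    exact zero_ne_one hw₀1
  refine ⟨μ, hμ, fun w hw => ?_⟩
  rcases (dotProduct_self_nonneg w).eq_or_lt with hw0 | hwpos
  · rw [← hw0, mul_zero]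
    exact dotProduct_self_nonneg _
  set c := (√(w ⬝ᵥ w))⁻¹
  have hc : c ^ 2 * (w ⬝ᵥ w) = 1 := by
    rw [inv_pow, Real.sq_sqrt hwpos.le, inv_mul_cancel₀ hwpos.ne']
  have hcw := hμS (c • w) ⟨Submodule.smul_mem _ c hw, by
    simp only [Set.mem_ofPred_eq, smul_dotProduct, dotProduct_smul, smul_eq_mul, ← mul_assoc,
      ← sq, hc]⟩
  simp only [f, mulVec_smul, smul_dotProduct, dotProduct_smul, smul_eq_mul, ← mul_assoc,
    ← sq] at hcw
  calc μ * (w ⬝ᵥ w) ≤ c ^ 2 * (A *ᵥ w ⬝ᵥ A *ᵥ w) * (w ⬝ᵥ w) :=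
        mul_le_mul_of_nonneg_right hcw hwpos.le
    _ = A *ᵥ w ⬝ᵥ A *ᵥ w := by linear_combination (A *ᵥ w ⬝ᵥ A *ᵥ w) * hc

section LeastSquares

variable [Fintype m]

def IsLeastSquaresSolution (A : Matrix m n ℝ) (b : m → ℝ) (z : n → ℝ) : Prop :=
  ∀ y, (A *ᵥ z - b) ⬝ᵥ (A *ᵥ z - b) ≤ (A *ᵥ y - b) ⬝ᵥ (A *ᵥ y - b)

variable {b : m → ℝ} {z : n → ℝ}

lemma IsLeastSquaresSolution.transpose_mulVec_sub_eq_zero (hz : IsLeastSquaresSolution A b z) :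
    Aᵀ *ᵥ (A *ᵥ z - b) = 0 := by
  set r := A *ᵥ z - b
  have horth : ∀ v, r ⬝ᵥ A *ᵥ v = 0 := fun v => dotProduct_eq_zero_of_forall_le fun t => by
    have hshift : A *ᵥ (z + t • v) - b = r + t • A *ᵥ v := by
      rw [mulVec_add, mulVec_smul, add_sub_right_comm]
    simpa only [hshift] using hz (z + t • v)
  rw [← dotProduct_self_eq_zero, dotProduct_transpose_mulVec]
  exact horth _

lemma IsLeastSquaresSolution.add {u : n → ℝ} (hz : IsLeastSquaresSolution A b z)
    (hu : A *ᵥ u = 0) : IsLeastSquaresSolution A b (z + u) := by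
  intro y
  rw [mulVec_add, hu, add_zero]
  exact hz y

lemma IsLeastSquaresSolution.mem_kerOrthogonal (hz : IsLeastSquaresSolution A b z)
    (hmin : ∀ y, IsLeastSquaresSolution A b y → z ⬝ᵥ z ≤ y ⬝ᵥ y) : z ∈ kerOrthogonal A :=
  fun u hu => dotProduct_eq_zero_of_forall_le fun t =>
    hmin _ (hz.add (by rw [mulVec_smul, hu, smul_zero]))

end LeastSquares

section GradientStep

variable [Fintype m] [DecidableEq n] (τ : ℝ)

lemma one_sub_smul_transpose_mul_mulVec (A : Matrix m n ℝ) (w : n → ℝ) :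
    (1 - τ • (Aᵀ * A)) *ᵥ w = w - τ • Aᵀ *ᵥ (A *ᵥ w) := by
  rw [sub_mulVec, one_mulVec, smul_mulVec, mulVec_mulVec]

lemma one_sub_smul_transpose_mul_mulVec_mem_kerOrthogonal {w : n → ℝ}
    (hw : w ∈ kerOrthogonal A) : (1 - τ • (Aᵀ * A)) *ᵥ w ∈ kerOrthogonal A := by
  intro u hu
  rw [one_sub_smul_transpose_mul_mulVec, sub_dotProduct, smul_dotProduct,
    dotProduct_comm (Aᵀ *ᵥ _), dotProduct_transpose_mulVec, hu, dotProduct_zero, hw u hu]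
  simp

lemma dotProduct_self_one_sub_smul_transpose_mul_mulVec_le {K : ℝ}
    (hK : ∀ u, Aᵀ *ᵥ u ⬝ᵥ Aᵀ *ᵥ u ≤ K * (u ⬝ᵥ u)) (w : n → ℝ) :
    (1 - τ • (Aᵀ * A)) *ᵥ w ⬝ᵥ (1 - τ • (Aᵀ * A)) *ᵥ w ≤
      w ⬝ᵥ w - τ * (2 - τ * K) * (A *ᵥ w ⬝ᵥ A *ᵥ w) := by
  rw [one_sub_smul_transpose_mul_mulVec, sub_eq_add_neg, ← neg_smul, dotProduct_add_smul_self,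
    dotProduct_transpose_mulVec]
  nlinarith [mul_le_mul_of_nonneg_left (hK (A *ᵥ w)) (sq_nonneg τ)]

lemma IsLeastSquaresSolution.one_sub_smul_transpose_mul_mulVec_add
    (hz : IsLeastSquaresSolution A b z) :
    (1 - τ • (Aᵀ * A)) *ᵥ z + τ • Aᵀ *ᵥ b = z := by
  have hnormal := hz.transpose_mulVec_sub_eq_zero
  rw [mulVec_sub, sub_eq_zero] at hnormal
  rw [one_sub_smul_transpose_mul_mulVec, hnormal, sub_add_cancel]

end GradientStep

theorem tendsto_minNorm_leastSquares_of_gradientDescent [Fintype m] [DecidableEq n]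
    {A : Matrix m n ℝ} {b : m → ℝ} {K τ : ℝ} (hK : ∀ u, Aᵀ *ᵥ u ⬝ᵥ Aᵀ *ᵥ u ≤ K * (u ⬝ᵥ u))
    (hτ0 : 0 < τ) (hτK : τ * K < 2) {z : n → ℝ} (hz : IsLeastSquaresSolution A b z)
    (hzmin : ∀ y, IsLeastSquaresSolution A b y → z ⬝ᵥ z ≤ y ⬝ᵥ y)
    {x : ℕ → n → ℝ} (hx0 : x 0 ∈ kerOrthogonal A)
    (hx : ∀ k, x (k + 1) = (1 - τ • (Aᵀ * A)) *ᵥ x k + τ • Aᵀ *ᵥ b) :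
    Tendsto x atTop (𝓝 z) := by
  obtain ⟨μ, hμ, hμA⟩ := exists_pos_mul_le_dotProduct_mulVec A
  set e : ℕ → n → ℝ := fun k => x k - z
  have he : ∀ k, e (k + 1) = (1 - τ • (Aᵀ * A)) *ᵥ e k := fun k => by
    simp only [e]
    rw [hx k, mulVec_sub]
    linear_combination hz.one_sub_smul_transpose_mul_mulVec_add τ
  have he_mem : ∀ k, e k ∈ kerOrthogonal A := by
    intro k
    induction k with
    | zero => exact sub_mem hx0 (hz.mem_kerOrthogonal hzmin)
    | succ k ih => exact he k ▸ one_sub_smul_transpose_mul_mulVec_mem_kerOrthogonal τ ih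
  have hrate : 0 < τ * (2 - τ * K) := mul_pos hτ0 (by linarith)
  have hdecay : ∀ k, e (k + 1) ⬝ᵥ e (k + 1) ≤ (1 - τ * (2 - τ * K) * μ) * (e k ⬝ᵥ e k) := by
    intro k
    rw [he k]
    calc _ ≤ e k ⬝ᵥ e k - τ * (2 - τ * K) * (A *ᵥ e k ⬝ᵥ A *ᵥ e k) :=
          dotProduct_self_one_sub_smul_transpose_mul_mulVec_le τ hK (e k)
      _ ≤ e k ⬝ᵥ e k - τ * (2 - τ * K) * (μ * (e k ⬝ᵥ e k)) := by
          gcongr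
          exact hμA _ (he_mem k)
      _ = _ := by ring
  have hq : 1 - τ * (2 - τ * K) * μ < 1 := by nlinarith
  simpa [e] using (tendsto_nhds_zero_of_dotProduct_self_le_mul hq hdecay).add_const z

end Matrix

section Incidence

variable {V : Type*} [DecidableEq V] {E : Finset (V × V)} {A : Matrix E V ℝ}

lemma abs_incidence_eq (hA : ∀ (e : E) (i : V),
      A e i = if (e : V × V).1 = i then 1 else if (e : V × V).2 = i then -1 else 0)
    (e : E) (i : V) : |A e i| = if (e : V × V).1 = i ∨ (e : V × V).2 = i then 1 else 0 := by
  rw [hA]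
  split_ifs <;> simp_all

lemma incidence_transpose_mulVec_dotProduct_self_le [Fintype V] (hA : ∀ (e : E) (i : V),
      A e i = if (e : V × V).1 = i then 1 else if (e : V × V).2 = i then -1 else 0)
    {d : ℕ} (hdeg : ∀ i, (E.filter (fun e => e.1 = i ∨ e.2 = i)).card ≤ d) (u : E → ℝ) :
    Aᵀ *ᵥ u ⬝ᵥ Aᵀ *ᵥ u ≤ d * 2 * (u ⬝ᵥ u) := by
  refine transpose_mulVec_dotProduct_self_le d.cast_nonneg (fun e => ?_) (fun i => ?_) u
  · simp only [abs_incidence_eq hA, Finset.sum_boole]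
    have : Finset.univ.filter (fun i => (e : V × V).1 = i ∨ (e : V × V).2 = i) ⊆
        {(e : V × V).1, (e : V × V).2} := fun i hi => by
      simp only [Finset.mem_filter] at hi
      rcases hi.2 with h | h <;> simp [h]
    exact_mod_cast (Finset.card_le_card this).trans Finset.card_le_two
  · simp only [abs_incidence_eq hA]
    rw [Finset.sum_coe_sort E (fun e => if e.1 = i ∨ e.2 = i then (1 : ℝ) else 0),
      Finset.sum_boole]
    exact_mod_cast hdeg i

end Incidence

theorem stmt4_general {n : ℕ} (E : Finset (Fin n × Fin n))
    (A : Matrix {e // e ∈ E} (Fin n) ℝ)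
    (hA : ∀ (e : {e // e ∈ E}) (i : Fin n),
      A e i = if (e : Fin n × Fin n).1 = i then 1
        else if (e : Fin n × Fin n).2 = i then -1 else 0)
    (b : {e // e ∈ E} → ℝ)
    (dmax : ℕ)
    (hdmax : dmax = Finset.univ.sup
      (fun i => (E.filter (fun e => e.1 = i ∨ e.2 = i)).card))
    (τ : ℝ) (hτ0 : 0 < τ) (hτ1 : τ < 1 / (dmax : ℝ))
    (x : ℕ → Fin n → ℝ) (hx0 : x 0 = 0)
    (hx : ∀ k, x (k + 1) =
      ((1 : Matrix (Fin n) (Fin n) ℝ) - τ • (Aᵀ * A)).mulVec (x k)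
        + τ • Aᵀ.mulVec b)
    (xstar : Fin n → ℝ)
    (hxstar_min : ∀ z : Fin n → ℝ,
      ∑ e : {e // e ∈ E}, (A.mulVec xstar - b) e ^ 2 ≤
        ∑ e : {e // e ∈ E}, (A.mulVec z - b) e ^ 2)
    (hxstar_norm : ∀ y : Fin n → ℝ,
      (∀ z : Fin n → ℝ,
        ∑ e : {e // e ∈ E}, (A.mulVec y - b) e ^ 2 ≤
          ∑ e : {e // e ∈ E}, (A.mulVec z - b) e ^ 2) →
      ∑ i, xstar i ^ 2 ≤ ∑ i, y i ^ 2) :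
    Tendsto x atTop (nhds xstar) := by
  have hdmax_pos : 0 < (dmax : ℝ) := one_div_pos.1 (hτ0.trans hτ1)
  have hK := incidence_transpose_mulVec_dotProduct_self_le hA (d := dmax)
    fun i => hdmax ▸ Finset.le_sup (f := fun i => (E.filter (fun e => e.1 = i ∨ e.2 = i)).card)
      (Finset.mem_univ i)
  have hτK : τ * (dmax * 2) < 2 := by
    rw [lt_div_iff₀ hdmax_pos] at hτ1
    linarith
  simp only [sum_sq_eq_dotProduct_self] at hxstar_min hxstar_norm
  exact tendsto_minNorm_leastSquares_of_gradientDescent hK hτ0 hτK hxstar_min hxstar_norm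
    (hx0 ▸ zero_mem _) hx

/-- For a weakly connected oriented graph with incidence matrix `A`,
Laplacian `L = AᵀA` and maximum degree `d_max`, and any `0 < τ < 1/d_max`,
the gradient descent iteration `x(k+1) = (I - τL) x(k) + τ Aᵀ b` started at
`x(0) = 0` converges to the unique minimum-Euclidean-norm minimizer of
`z ↦ ‖A z - b‖₂²`. -/
theorem stmt4 {n : ℕ} (hn : 3 ≤ n) (E : Finset (Fin n × Fin n))
    (horient : ∀ e ∈ E, e.1 < e.2)
    (hconn : (SimpleGraph.fromRel (fun i j => (i, j) ∈ E)).Connected)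
    (A : Matrix {e // e ∈ E} (Fin n) ℝ)
    (hA : ∀ (e : {e // e ∈ E}) (i : Fin n),
      A e i = if (e : Fin n × Fin n).1 = i then 1
        else if (e : Fin n × Fin n).2 = i then -1 else 0)
    (b : {e // e ∈ E} → ℝ)
    (dmax : ℕ)
    (hdmax : dmax = Finset.univ.sup
      (fun i => (E.filter (fun e => e.1 = i ∨ e.2 = i)).card))
    (τ : ℝ) (hτ0 : 0 < τ) (hτ1 : τ < 1 / (dmax : ℝ))
    (x : ℕ → Fin n → ℝ) (hx0 : x 0 = 0)
    (hx : ∀ k, x (k + 1) =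
      ((1 : Matrix (Fin n) (Fin n) ℝ) - τ • (Aᵀ * A)).mulVec (x k)
        + τ • Aᵀ.mulVec b)
    (xstar : Fin n → ℝ)
    (hxstar_min : ∀ z : Fin n → ℝ,
      ∑ e : {e // e ∈ E}, (A.mulVec xstar - b) e ^ 2 ≤
        ∑ e : {e // e ∈ E}, (A.mulVec z - b) e ^ 2)
    (hxstar_norm : ∀ y : Fin n → ℝ,
      (∀ z : Fin n → ℝ,
        ∑ e : {e // e ∈ E}, (A.mulVec y - b) e ^ 2 ≤
          ∑ e : {e // e ∈ E}, (A.mulVec z - b) e ^ 2) →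
      ∑ i, xstar i ^ 2 ≤ ∑ i, y i ^ 2) :
    Tendsto x atTop (nhds xstar) :=
  stmt4_general E A hA b dmax hdmax τ hτ0 hτ1 x hx0 hx xstar hxstar_min hxstar_norm
end

section
/- Let Q ∈ ℝ^{V×V} be a substochastic matrix (row version: nonnegative entries with each row summing to at most 1). If in the graph associated to Q (with an edge (i,j) whenever Q_{ij} > 0) there is a directed path from every node to some deficiency node (a node whose row sum is strictly less than 1), then Q is Schur stable. -/
open Matrix

/-!
If `Q v = μ v` with `v ≠ 0` and `‖μ‖ ≥ 1`, the nonnegative vector `w = ‖v‖` satisfies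
`w ≤ Q w`. At a node `b` where `w` attains its maximum `M > 0` the chain
`M ≤ (Q w) b ≤ (∑ j, Q b j) * M ≤ M` is tight, which forces row sum one at `b` and
`w = M` at every successor of `b`. Propagating along a path from `b` to a deficiency node
gives a contradiction.
-/

namespace Matrix

variable {V : Type*} [Fintype V]

theorem mulVec_apply_eq_of_le_mulVec_of_eq_max {Q : Matrix V V ℝ}
    (hnonneg : ∀ i j, 0 ≤ Q i j) (hsub : ∀ i, ∑ j, Q i j ≤ 1) {w : V → ℝ}
    (hw : ∀ i, w i ≤ (Q *ᵥ w) i) {M : ℝ} (hM : ∀ i, w i ≤ M) (hM₀ : 0 ≤ M) {b : V}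
    (hb : w b = M) :
    (Q *ᵥ w) b = ∑ j, Q b j * M ∧ ∑ j, Q b j * M = M := by
  have hle : (Q *ᵥ w) b ≤ ∑ j, Q b j * M :=
    Finset.sum_le_sum fun j _ => mul_le_mul_of_nonneg_left (hM j) (hnonneg b j)
  have hge : ∑ j, Q b j * M ≤ M := by
    rw [← Finset.sum_mul]
    exact mul_le_of_le_one_left hM₀ (hsub b)
  have := hw b
  constructor <;> linarith

theorem sum_row_eq_one_of_le_mulVec_of_eq_max {Q : Matrix V V ℝ}
    (hnonneg : ∀ i j, 0 ≤ Q i j) (hsub : ∀ i, ∑ j, Q i j ≤ 1) {w : V → ℝ}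
    (hw : ∀ i, w i ≤ (Q *ᵥ w) i) {M : ℝ} (hM : ∀ i, w i ≤ M) (hM₀ : 0 < M) {b : V}
    (hb : w b = M) :
    ∑ j, Q b j = 1 := by
  have h := (mulVec_apply_eq_of_le_mulVec_of_eq_max hnonneg hsub hw hM hM₀.le hb).2
  rw [← Finset.sum_mul] at h
  exact (mul_eq_right₀ hM₀.ne').1 h

theorem eq_max_of_le_mulVec_of_eq_max {Q : Matrix V V ℝ}
    (hnonneg : ∀ i j, 0 ≤ Q i j) (hsub : ∀ i, ∑ j, Q i j ≤ 1) {w : V → ℝ}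
    (hw : ∀ i, w i ≤ (Q *ᵥ w) i) {M : ℝ} (hM : ∀ i, w i ≤ M) (hM₀ : 0 ≤ M) {b c : V}
    (hb : w b = M) (hbc : 0 < Q b c) :
    w c = M := by
  have h := (mulVec_apply_eq_of_le_mulVec_of_eq_max hnonneg hsub hw hM hM₀ hb).1
  have hterm := (Finset.sum_eq_sum_iff_of_le fun j _ =>
    mul_le_mul_of_nonneg_left (hM j) (hnonneg b j)).1 h c (Finset.mem_univ c)
  exact mul_left_cancel₀ hbc.ne' hterm

theorem le_zero_of_le_mulVec {Q : Matrix V V ℝ}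
    (hnonneg : ∀ i j, 0 ≤ Q i j) (hsub : ∀ i, ∑ j, Q i j ≤ 1)
    (hpath : ∀ i : V, ∃ j : V,
      Relation.ReflTransGen (fun a b => 0 < Q a b) i j ∧ ∑ h, Q j h < 1)
    {w : V → ℝ} (hw : ∀ i, w i ≤ (Q *ᵥ w) i) (i : V) :
    w i ≤ 0 := by
  have : Nonempty V := ⟨i⟩
  obtain ⟨b, hb⟩ := Finite.exists_max w
  by_contra! hi
  have hM₀ : 0 < w b := hi.trans_le (hb i)
  have hmax_of_reach :
      ∀ d, Relation.ReflTransGen (fun a b => 0 < Q a b) b d → w d = w b := by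
    intro d hbd
    induction hbd with
    | refl => rfl
    | tail _ hcd ih => exact eq_max_of_le_mulVec_of_eq_max hnonneg hsub hw hb hM₀.le ih hcd
  obtain ⟨d, hbd, hd⟩ := hpath b
  exact hd.ne (sum_row_eq_one_of_le_mulVec_of_eq_max hnonneg hsub hw hb hM₀ (hmax_of_reach d hbd))

theorem norm_mul_norm_le_mulVec_norm {Q : Matrix V V ℝ} (hnonneg : ∀ i j, 0 ≤ Q i j)
    {v : V → ℂ} {μ : ℂ} (hv : Q.map Complex.ofReal *ᵥ v = μ • v) (i : V) :
    ‖μ‖ * ‖v i‖ ≤ (Q *ᵥ fun j => ‖v j‖) i := by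
  rw [← norm_mul, ← smul_eq_mul, ← Pi.smul_apply μ v i, ← hv]
  calc ‖∑ j, (Q i j : ℂ) * v j‖
      ≤ ∑ j, ‖(Q i j : ℂ) * v j‖ := norm_sum_le _ _
    _ = ∑ j, Q i j * ‖v j‖ := by
        refine Finset.sum_congr rfl fun j _ => ?_
        rw [norm_mul, Complex.norm_real, Real.norm_of_nonneg (hnonneg i j)]

end Matrix

/-- A row-substochastic matrix `Q` such that, in the associated graph
(an edge `(i,j)` whenever `Q i j > 0`), every node has a directed path to
some deficiency node (a node whose row sum is `< 1`), is Schur stable: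
every complex eigenvalue of `Q` has absolute value strictly less than one. -/
theorem stmt5 {V : Type*} [Fintype V] [DecidableEq V] (Q : Matrix V V ℝ)
    (hnonneg : ∀ i j, 0 ≤ Q i j) (hsub : ∀ i, ∑ j, Q i j ≤ 1)
    (hpath : ∀ i : V, ∃ j : V,
      Relation.ReflTransGen (fun a b => 0 < Q a b) i j ∧ ∑ h, Q j h < 1) :
    ∀ μ ∈ spectrum ℂ (Q.map Complex.ofReal), ‖μ‖ < 1 := by
  intro μ hμ
  by_contra! hμ₁
  rw [← Matrix.spectrum_toLin', ← Module.End.hasEigenvalue_iff_mem_spectrum] at hμ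
  obtain ⟨v, hv⟩ := hμ.exists_hasEigenvector
  have hv_eq : Q.map Complex.ofReal *ᵥ v = μ • v := by
    simpa only [Matrix.toLin'_apply] using hv.apply_eq_smul
  refine hv.2 (funext fun i => norm_le_zero_iff.1 ?_)
  refine le_zero_of_le_mulVec hnonneg hsub hpath (w := fun j => ‖v j‖) (fun i => ?_) i
  calc ‖v i‖ ≤ ‖μ‖ * ‖v i‖ := le_mul_of_one_le_left (norm_nonneg _) hμ₁
    _ ≤ _ := norm_mul_norm_le_mulVec_norm hnonneg hv_eq i
end

section
/- Let Q ∈ ℝ^{V×V} be a substochastic matrix such that in the graph associated to Q there is a directed path from every node to some deficiency node. Then: (i) for every positive integer k, the matrix Q^k is substochastic and the set 𝒱_k of deficiency nodes of Q^k satisfies 𝒱_k ⊆ 𝒱_{k+1}; and (ii) there exists a positive integer k⋆ such that every node is a deficiency node of Q^{k⋆}, i.e. every row of Q^{k⋆} sums to strictly less than one. -/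
/-!
Deficiency propagates backwards along edges: if `Q a b > 0` and row `b` of `Q ^ m` sums to less
than one, then row `a` of `Q ^ (m + 1) = Q * Q ^ m` loses the mass `Q a b * (1 - rowsum)` too.
Following a path from each node to a deficiency node makes every node deficient for some power,
and since row sums of powers of a substochastic matrix only decrease with the exponent, a single
power large enough for all (finitely many) nodes works.
-/

namespace Matrix

variable {R n : Type*} [Fintype n]

lemma mulVec_one_apply [NonAssocSemiring R] (M : Matrix n n R) (i : n) :
    (M *ᵥ 1) i = ∑ j, M i j := by
  simp [mulVec, dotProduct]

section OrderedSemiring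

variable [Semiring R] [PartialOrder R] [IsOrderedRing R]

lemma mulVec_le_mulVec_of_nonneg {M : Matrix n n R} (hM : ∀ i j, 0 ≤ M i j) {v w : n → R}
    (hvw : v ≤ w) : M *ᵥ v ≤ M *ᵥ w :=
  fun i => Finset.sum_le_sum fun j _ => mul_le_mul_of_nonneg_left (hvw j) (hM i j)

variable [DecidableEq n]

def rowSubstochastic (R n : Type*) [Fintype n] [DecidableEq n] [Semiring R] [PartialOrder R]
    [IsOrderedRing R] : Submonoid (Matrix n n R) where
  carrier := {M | (∀ i j, 0 ≤ M i j) ∧ M *ᵥ 1 ≤ 1}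
  mul_mem' {M N} hM hN := by
    refine ⟨fun i j => Finset.sum_nonneg fun l _ => mul_nonneg (hM.1 i l) (hN.1 l j), ?_⟩
    rw [← mulVec_mulVec]
    exact (mulVec_le_mulVec_of_nonneg hM.1 hN.2).trans hM.2
  one_mem' := by simp [zero_le_one_elem]

lemma mem_rowSubstochastic_iff_sum {M : Matrix n n R} :
    M ∈ rowSubstochastic R n ↔ (∀ i j, 0 ≤ M i j) ∧ ∀ i, ∑ j, M i j ≤ 1 := by
  simp only [rowSubstochastic, Submonoid.mem_mk, Subsemigroup.mem_mk, Set.mem_ofPred_eq,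
    Pi.le_def, mulVec_one_apply, Pi.one_apply]

lemma mul_mulVec_one_le_of_mem_rowSubstochastic {M N : Matrix n n R} (hM : ∀ i j, 0 ≤ M i j)
    (hN : N ∈ rowSubstochastic R n) : (M * N) *ᵥ 1 ≤ M *ᵥ 1 := by
  rw [← mulVec_mulVec]
  exact mulVec_le_mulVec_of_nonneg hM hN.2

lemma antitone_pow_mulVec_one {Q : Matrix n n R} (hQ : Q ∈ rowSubstochastic R n) :
    Antitone fun k : ℕ => (Q ^ k) *ᵥ 1 :=
  antitone_nat_of_succ_le fun k => by
    rw [pow_succ]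
    exact mul_mulVec_one_le_of_mem_rowSubstochastic (pow_mem hQ k).1 hQ

end OrderedSemiring

section StrictOrderedRing

variable [Ring R] [LinearOrder R] [IsStrictOrderedRing R] [DecidableEq n]

lemma mul_mulVec_one_lt_one {M N : Matrix n n R} (hM : M ∈ rowSubstochastic R n)
    (hN : N ∈ rowSubstochastic R n) {a b : n} (hab : 0 < M a b) (hb : (N *ᵥ 1) b < 1) :
    ((M * N) *ᵥ 1) a < 1 := by
  rw [← mulVec_mulVec]
  calc (M *ᵥ (N *ᵥ 1)) a < (M *ᵥ 1) a :=
        Finset.sum_lt_sum (fun l _ => mul_le_mul_of_nonneg_left (hN.2 l) (hM.1 a l))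
          ⟨b, Finset.mem_univ b, mul_lt_mul_of_pos_left hb hab⟩
    _ ≤ 1 := hM.2 a

lemma exists_pow_succ_mulVec_one_lt_one {Q : Matrix n n R} (hQ : Q ∈ rowSubstochastic R n)
    {i j : n} (hij : Relation.ReflTransGen (fun a b => 0 < Q a b) i j) (hj : (Q *ᵥ 1) j < 1) :
    ∃ k, (Q ^ (k + 1) *ᵥ 1) i < 1 := by
  induction hij using Relation.ReflTransGen.head_induction_on with
  | refl => exact ⟨0, by simpa using hj⟩
  | head hab _ ih =>
    obtain ⟨k, hk⟩ := ih
    exact ⟨k + 1, by rw [pow_succ']; exact mul_mulVec_one_lt_one hQ (pow_mem hQ _) hab hk⟩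

lemma exists_forall_pow_succ_mulVec_one_lt_one {Q : Matrix n n R}
    (hQ : Q ∈ rowSubstochastic R n)
    (hpath : ∀ i, ∃ j, Relation.ReflTransGen (fun a b => 0 < Q a b) i j ∧ (Q *ᵥ 1) j < 1) :
    ∃ k, ∀ i, (Q ^ (k + 1) *ᵥ 1) i < 1 := by
  choose j hij hj using hpath
  choose k hk using fun i => exists_pow_succ_mulVec_one_lt_one hQ (hij i) (hj i)
  refine ⟨Finset.univ.sup k, fun i => lt_of_le_of_lt ?_ (hk i)⟩
  exact antitone_pow_mulVec_one hQ (Nat.succ_le_succ (Finset.le_sup (Finset.mem_univ i))) i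

end StrictOrderedRing

end Matrix

open Matrix

/-- Let `Q` be a row-substochastic matrix such that, in its associated graph,
every node has a directed path to some deficiency node. Then (i) every power
`Q^k` (`k ≥ 1`) is substochastic and the set of deficiency nodes of `Q^k` is
contained in that of `Q^(k+1)`; and (ii) there is a power `Q^k⋆` all of whose
rows sum to strictly less than one. -/
theorem stmt6 {V : Type*} [Fintype V] [DecidableEq V] (Q : Matrix V V ℝ)
    (hnonneg : ∀ i j, 0 ≤ Q i j) (hsub : ∀ i, ∑ j, Q i j ≤ 1)
    (hpath : ∀ i : V, ∃ j : V,
      Relation.ReflTransGen (fun a b => 0 < Q a b) i j ∧ ∑ h, Q j h < 1) :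
    (∀ k : ℕ, 1 ≤ k →
      (∀ i j, 0 ≤ (Q ^ k) i j) ∧ (∀ i, ∑ j, (Q ^ k) i j ≤ 1) ∧
      {i | ∑ j, (Q ^ k) i j < 1} ⊆ {i | ∑ j, (Q ^ (k + 1)) i j < 1}) ∧
    (∃ kstar : ℕ, 1 ≤ kstar ∧ ∀ i, ∑ j, (Q ^ kstar) i j < 1) := by
  have hQ : Q ∈ rowSubstochastic ℝ V := mem_rowSubstochastic_iff_sum.mpr ⟨hnonneg, hsub⟩
  simp only [← mulVec_one_apply] at hpath ⊢
  refine ⟨fun k _ => ⟨(pow_mem hQ k).1, ?_, ?_⟩, ?_⟩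
  · simpa only [mulVec_one_apply] using (mem_rowSubstochastic_iff_sum.mp (pow_mem hQ k)).2
  · exact fun i hi => lt_of_le_of_lt (antitone_pow_mulVec_one hQ k.le_succ i) hi
  · obtain ⟨k, hk⟩ := exists_forall_pow_succ_mulVec_one_lt_one hQ hpath
    exact ⟨k + 1, k.succ_pos, hk⟩
end

section
/- Let A ∈ ℝ^{n×n} be column-stochastic, let m ∈ (0,1), and let M = (1−m)A + (m/n)𝟙𝟙ᵀ. Then I − (1−m)A is invertible, and for every initial condition x(0) ∈ ℝ^n with 𝟙ᵀ x(0) = 1, the sequence defined by x(k+1) = M x(k) converges, as k → ∞, to the PageRank vector π = (I − (1−m)A)^{-1} (m/n) 𝟙. -/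
open Matrix Filter Topology

/-! With `B = (1 - m) • A`, the absolute column sums of `B` equal `1 - m < 1`, so `B` contracts
the ℓ¹ norm and `B ^ k → 0`. Hence `1 - B` is invertible (a vector fixed by `B` is fixed by every
`B ^ k`), and `π = (1 - B)⁻¹ (m/n) 𝟙` is the fixed point of `v ↦ B v + (m/n) 𝟙`. Since `M` is
column-stochastic, the iterates keep coordinate sum `1`, so `x (k + 1) = B x k + (m/n) 𝟙` and
`x k - π = B ^ k (x 0 - π) → 0`. -/

namespace Matrix

variable {ι : Type*} [Fintype ι]

section LinftyOpNorm

attribute [local instance] Matrix.linftyOpSeminormedAddCommGroup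

theorem linfty_opNorm_le_of_sum_norm_le {κ α : Type*} [Fintype κ] [SeminormedAddCommGroup α]
    {B : Matrix ι κ α} {c : ℝ} (hc : 0 ≤ c) (h : ∀ i, ∑ j, ‖B i j‖ ≤ c) : ‖B‖ ≤ c := by
  lift c to NNReal using hc
  rw [linfty_opNorm_def, NNReal.coe_le_coe]
  exact Finset.sup_le fun i _ => by
    rw [← NNReal.coe_le_coe, NNReal.coe_sum]
    exact h i

end LinftyOpNorm

variable [DecidableEq ι]

section Topological

variable {R : Type*} [TopologicalSpace R]

theorem tendsto_of_affine_iterate [CommRing R] [IsTopologicalRing R] {B : Matrix ι ι R}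
    (hB : Tendsto (B ^ ·) atTop (𝓝 0)) {b π : ι → R} (hπ : B *ᵥ π + b = π)
    {x : ℕ → ι → R} (hx : ∀ k, x (k + 1) = B *ᵥ x k + b) : Tendsto x atTop (𝓝 π) := by
  have hclosed : ∀ k, π + B ^ k *ᵥ (x 0 - π) = x k := by
    intro k
    induction k with
    | zero => simp
    | succ k ih => rw [hx, ← ih, mulVec_add, mulVec_mulVec, ← pow_succ', add_right_comm, hπ]
  have hcont : Continuous fun C : Matrix ι ι R => π + C *ᵥ (x 0 - π) :=
    continuous_const.add (continuous_id.matrix_mulVec continuous_const)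
  have hlim := (hcont.tendsto 0).comp hB
  rw [zero_mulVec, add_zero] at hlim
  exact hlim.congr hclosed

theorem isUnit_one_sub_of_tendsto_pow_nhds_zero [Field R] [IsTopologicalRing R] [T2Space R]
    {B : Matrix ι ι R} (hB : Tendsto (B ^ ·) atTop (𝓝 0)) : IsUnit (1 - B) := by
  rw [← mulVec_injective_iff_isUnit]
  intro u v huv
  have hfix : B *ᵥ (u - v) = u - v := by
    have h0 : (1 - B) *ᵥ (u - v) = 0 := by rw [mulVec_sub, huv, sub_self]
    rwa [sub_mulVec, one_mulVec, sub_eq_zero, eq_comm] at h0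
  have hpow : ∀ k, B ^ k *ᵥ (u - v) = u - v := by
    intro k
    induction k with
    | zero => simp
    | succ k ih => rw [pow_succ, ← mulVec_mulVec, hfix, ih]
  have hlim : Tendsto (fun k => B ^ k *ᵥ (u - v)) atTop (𝓝 (0 *ᵥ (u - v))) :=
    ((continuous_id.matrix_mulVec continuous_const).tendsto 0).comp hB
  simp only [hpow, zero_mulVec] at hlim
  exact sub_eq_zero.1 (tendsto_nhds_unique tendsto_const_nhds hlim)

end Topological

theorem mulVec_nonsing_inv_one_sub_fixed {R : Type*} [CommRing R] {B : Matrix ι ι R}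
    (hB : IsUnit (1 - B)) (b : ι → R) :
    B *ᵥ ((1 - B)⁻¹ *ᵥ b) + b = (1 - B)⁻¹ *ᵥ b := by
  have h : (1 - B) *ᵥ ((1 - B)⁻¹ *ᵥ b) = b := by
    rw [mulVec_mulVec, mul_nonsing_inv _ ((isUnit_iff_isUnit_det _).1 hB), one_mulVec]
  rw [sub_mulVec, one_mulVec] at h
  nth_rw 2 [← h]
  abel

/- The ℓ¹ operator norm of `B` is the ℓ^∞ operator norm (`Matrix.linftyOpNormedRing`) of `Bᵀ`. -/
theorem tendsto_pow_atTop_nhds_zero_of_sum_abs_le {B : Matrix ι ι ℝ} {c : ℝ} (hc : c < 1)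
    (hcol : ∀ j, ∑ i, |B i j| ≤ c) : Tendsto (B ^ ·) atTop (𝓝 0) := by
  let := Matrix.linftyOpNormedRing (n := ι) (α := ℝ)
  have hnorm : ‖Bᵀ‖ < 1 :=
    (linfty_opNorm_le_of_sum_norm_le (le_max_right c 0) fun j =>
      (hcol j).trans (le_max_left c 0)).trans_lt (max_lt hc one_pos)
  have := (continuous_id.matrix_transpose.tendsto 0).comp
    (tendsto_pow_atTop_nhds_zero_of_norm_lt_one hnorm)
  simpa [Function.comp_def, ← transpose_pow] using this

theorem tendsto_pow_smul_of_mem_colStochastic {A : Matrix ι ι ℝ} (hA : A ∈ colStochastic ℝ ι)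
    {c : ℝ} (hc : |c| < 1) : Tendsto ((c • A) ^ ·) atTop (𝓝 0) := by
  refine tendsto_pow_atTop_nhds_zero_of_sum_abs_le hc fun j => ?_
  simp [abs_mul, abs_of_nonneg (nonneg_of_mem_colStochastic hA), ← Finset.mul_sum,
    sum_col_of_mem_colStochastic hA]

noncomputable def googleMatrix (A : Matrix ι ι ℝ) (m : ℝ) : Matrix ι ι ℝ :=
  (1 - m) • A + (m / Fintype.card ι) • of fun _ _ => 1

omit [DecidableEq ι] in
theorem googleMatrix_mulVec (A : Matrix ι ι ℝ) (m : ℝ) (v : ι → ℝ) :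
    googleMatrix A m *ᵥ v = ((1 - m) • A) *ᵥ v + fun _ => m / Fintype.card ι * ∑ i, v i := by
  rw [googleMatrix, add_mulVec]
  ext i
  simp [mulVec, dotProduct, Finset.mul_sum, mul_assoc]

theorem googleMatrix_mem_colStochastic [Nonempty ι] {A : Matrix ι ι ℝ}
    (hA : A ∈ colStochastic ℝ ι) {m : ℝ} (hm0 : 0 ≤ m) (hm1 : m ≤ 1) :
    googleMatrix A m ∈ colStochastic ℝ ι := by
  rw [mem_colStochastic_iff_sum]
  constructor
  · intro i j
    have := nonneg_of_mem_colStochastic hA (i := i) (j := j)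
    simp only [googleMatrix, add_apply, smul_apply, of_apply, smul_eq_mul, mul_one]
    positivity
  · intro j
    have hcard : (Fintype.card ι : ℝ) ≠ 0 := Nat.cast_ne_zero.2 Fintype.card_ne_zero
    simp [googleMatrix, Finset.sum_add_distrib, ← Finset.mul_sum, sum_col_of_mem_colStochastic hA,
      mul_div_cancel₀ m hcard]

end Matrix

/-- PageRank computation: for a column-stochastic matrix `A`, `m ∈ (0,1)` and
the Google matrix `M = (1-m)A + (m/n)𝟙𝟙ᵀ`, the matrix `I - (1-m)A` is
invertible and, for every stochastic-sum initial condition (`𝟙ᵀ x(0) = 1`),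
the power iteration `x(k+1) = M x(k)` converges to the PageRank vector
`π = (I - (1-m)A)⁻¹ (m/n) 𝟙`. -/
theorem stmt7 {n : ℕ} (hn : 3 ≤ n)
    (A : Matrix (Fin n) (Fin n) ℝ)
    (hnonneg : ∀ i j, 0 ≤ A i j) (hcol : ∀ j, ∑ i, A i j = 1)
    (m : ℝ) (hm : m ∈ Set.Ioo (0 : ℝ) 1)
    (M : Matrix (Fin n) (Fin n) ℝ)
    (hM : M = (1 - m) • A + (m / n) • Matrix.of (fun _ _ => (1 : ℝ)))
    (x : ℕ → Fin n → ℝ) (hx0 : ∑ i, x 0 i = 1)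
    (hx : ∀ k, x (k + 1) = M.mulVec (x k)) :
    IsUnit (1 - (1 - m) • A) ∧
      Tendsto x atTop
        (nhds ((1 - (1 - m) • A)⁻¹.mulVec (fun _ => m / n))) := by
  obtain ⟨hm0, hm1⟩ := hm
  have : Nonempty (Fin n) := ⟨⟨0, by omega⟩⟩
  have hA : A ∈ colStochastic ℝ (Fin n) := mem_colStochastic_iff_sum.2 ⟨hnonneg, hcol⟩
  have hMA : M = googleMatrix A m := by simp [hM, googleMatrix]
  have hpow := tendsto_pow_smul_of_mem_colStochastic hA (c := 1 - m)
    (abs_lt.2 ⟨by linarith, by linarith⟩)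
  have hunit := isUnit_one_sub_of_tendsto_pow_nhds_zero hpow
  have hsum : ∀ k, ∑ i, x k i = 1 := by
    intro k
    induction k with
    | zero => exact hx0
    | succ k ih =>
      rw [hx, hMA, sum_mulVec_of_mem_colStochastic
        (googleMatrix_mem_colStochastic hA hm0.le hm1.le), ih]
  refine ⟨hunit, tendsto_of_affine_iterate hpow (mulVec_nonsing_inv_one_sub_fixed hunit _)
    fun k => ?_⟩
  rw [hx, hMA, googleMatrix_mulVec, hsum]
  simp
end

section
/- Let A ∈ ℝ^{n×n} be column-stochastic, let m ∈ (0,1), and let M = (1−m)A + (m/n)𝟙𝟙ᵀ. Then I − (1−m)A is invertible and the vector π = (I − (1−m)A)^{-1} (m/n) 𝟙 is the unique vector in ℝ^n satisfying M π = π and 𝟙ᵀ π = 1. -/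
/-!
A column-stochastic matrix `A` does not increase the `ℓ¹` norm, so for `|c| < 1` the equation
`z = c • A *ᵥ z` forces `‖z‖₁ ≤ |c| ‖z‖₁`, i.e. `z = 0`: the matrix `1 - c • A` is invertible.
Since `𝟙ᵀ(1 - c • A) = (1 - c) 𝟙ᵀ`, the vector `π = (1 - (1 - m) • A)⁻¹ (m / n) 𝟙` has
coordinate sum `1`. On vectors of sum `1` the Google matrix acts as `y ↦ (1 - m) • A *ᵥ y + (m / n) 𝟙`,
so its fixed points of sum `1` are exactly the solutions of `(1 - (1 - m) • A) y = (m / n) 𝟙`,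
and that solution is `π`.
-/

open Matrix

namespace Matrix

theorem abs_mulVec_le_mulVec_abs {ι R : Type*} [Fintype ι] [CommRing R] [LinearOrder R]
    [IsOrderedRing R] {A : Matrix ι ι R} (hA : ∀ i j, 0 ≤ A i j) (x : ι → R) (i : ι) :
    |(A *ᵥ x) i| ≤ (A *ᵥ fun j => |x j|) i := by
  simp only [mulVec, dotProduct]
  refine (Finset.abs_sum_le_sum_abs _ _).trans_eq (Finset.sum_congr rfl fun j _ => ?_)
  rw [abs_mul, abs_of_nonneg (hA i j)]

section ColStochastic

variable {ι R : Type*} [Fintype ι] [DecidableEq ι] {A : Matrix ι ι R}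

theorem sum_abs_mulVec_le_of_mem_colStochastic [CommRing R] [LinearOrder R] [IsOrderedRing R]
    (hA : A ∈ colStochastic R ι) (x : ι → R) :
    ∑ i, |(A *ᵥ x) i| ≤ ∑ i, |x i| :=
  calc ∑ i, |(A *ᵥ x) i| ≤ ∑ i, (A *ᵥ fun j => |x j|) i :=
        Finset.sum_le_sum fun i _ => abs_mulVec_le_mulVec_abs hA.1 x i
    _ = ∑ i, |x i| := sum_mulVec_of_mem_colStochastic hA

theorem sum_one_sub_smul_mulVec_of_mem_colStochastic [CommRing R] [PartialOrder R]
    [IsOrderedRing R] (hA : A ∈ colStochastic R ι) (c : R) (y : ι → R) :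
    ∑ i, ((1 - c • A) *ᵥ y) i = (1 - c) * ∑ i, y i := by
  simp only [sub_mulVec, one_mulVec, smul_mulVec, Pi.sub_apply, Pi.smul_apply, smul_eq_mul,
    Finset.sum_sub_distrib, ← Finset.mul_sum, sum_mulVec_of_mem_colStochastic hA]
  ring

theorem mulVec_injective_one_sub_smul_of_mem_colStochastic [CommRing R] [LinearOrder R]
    [IsStrictOrderedRing R] (hA : A ∈ colStochastic R ι) {c : R} (hc : |c| < 1) :
    Function.Injective (1 - c • A).mulVec := by
  refine (injective_iff_map_eq_zero (1 - c • A).mulVecLin).2 fun z hz => ?_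
  have hfix : z = c • A *ᵥ z := by
    simpa [sub_mulVec, smul_mulVec, sub_eq_zero] using hz
  have hle : ∑ i, |z i| ≤ |c| * ∑ i, |z i| :=
    calc ∑ i, |z i| = |c| * ∑ i, |(A *ᵥ z) i| := by
          conv_lhs => rw [hfix]
          simp only [Pi.smul_apply, smul_eq_mul, abs_mul, Finset.mul_sum]
      _ ≤ |c| * ∑ i, |z i| :=
          mul_le_mul_of_nonneg_left (sum_abs_mulVec_le_of_mem_colStochastic hA z) (abs_nonneg c)
  have hzero : ∑ i, |z i| = 0 := by
    nlinarith [Finset.sum_nonneg fun i (_ : i ∈ Finset.univ) => abs_nonneg (z i)]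
  ext i
  simpa using (Finset.sum_eq_zero_iff_of_nonneg fun i _ => abs_nonneg (z i)).1 hzero i
    (Finset.mem_univ i)

theorem isUnit_one_sub_smul_of_mem_colStochastic [Field R] [LinearOrder R]
    [IsStrictOrderedRing R] (hA : A ∈ colStochastic R ι) {c : R} (hc : |c| < 1) :
    IsUnit (1 - c • A) :=
  mulVec_injective_iff_isUnit.1 (mulVec_injective_one_sub_smul_of_mem_colStochastic hA hc)

end ColStochastic

theorem smul_add_smul_allOnes_mulVec_eq_self_iff {ι R : Type*} [Fintype ι] [DecidableEq ι]
    [CommRing R] (A : Matrix ι ι R) (c a : R) (y : ι → R) :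
    (c • A + a • of fun _ _ => (1 : R) : Matrix ι ι R) *ᵥ y = y ↔
      (1 - c • A) *ᵥ y = fun _ => a * ∑ i, y i := by
  have hones : (of fun _ _ => (1 : R) : Matrix ι ι R) *ᵥ y = fun _ => ∑ i, y i := by
    ext; simp [mulVec, dotProduct]
  have hconst : (a • fun _ => ∑ i, y i) = fun _ : ι => a * ∑ i, y i := rfl
  rw [add_mulVec, smul_mulVec, smul_mulVec, hones, hconst, sub_mulVec, one_mulVec, smul_mulVec,
    sub_eq_iff_eq_add', eq_comm]

end Matrix

/-- For a column-stochastic matrix `A`, `m ∈ (0,1)` and the Google matrix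
`M = (1-m)A + (m/n)𝟙𝟙ᵀ`, the matrix `I - (1-m)A` is invertible and
`π = (I - (1-m)A)⁻¹ (m/n)𝟙` is the unique vector satisfying `M π = π`
and `𝟙ᵀ π = 1`. -/
theorem stmt8 {n : ℕ} (hn : 3 ≤ n)
    (A : Matrix (Fin n) (Fin n) ℝ)
    (hnonneg : ∀ i j, 0 ≤ A i j) (hcol : ∀ j, ∑ i, A i j = 1)
    (m : ℝ) (hm : m ∈ Set.Ioo (0 : ℝ) 1)
    (M : Matrix (Fin n) (Fin n) ℝ)
    (hM : M = (1 - m) • A + (m / n) • Matrix.of (fun _ _ => (1 : ℝ))) :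
    IsUnit (1 - (1 - m) • A) ∧
      (M.mulVec ((1 - (1 - m) • A)⁻¹.mulVec (fun _ => m / n)) =
          (1 - (1 - m) • A)⁻¹.mulVec (fun _ => m / n) ∧
        ∑ i, (1 - (1 - m) • A)⁻¹.mulVec (fun _ => m / n) i = 1) ∧
      (∀ y : Fin n → ℝ, M.mulVec y = y → ∑ i, y i = 1 →
        y = (1 - (1 - m) • A)⁻¹.mulVec (fun _ => m / n)) := by
  obtain ⟨hm0, hm1⟩ := hm
  have hA : A ∈ colStochastic ℝ (Fin n) := mem_colStochastic_iff_sum.2 ⟨hnonneg, hcol⟩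
  have hc : |1 - m| < 1 := abs_lt.2 ⟨by linarith, by linarith⟩
  set B := 1 - (1 - m) • A
  have hB : IsUnit B := isUnit_one_sub_smul_of_mem_colStochastic hA hc
  set π := B⁻¹ *ᵥ fun _ => m / n
  have hBπ : B *ᵥ π = fun _ => m / n := by
    rw [mulVec_mulVec, mul_nonsing_inv _ ((isUnit_iff_isUnit_det B).1 hB), one_mulVec]
  have hsum : ∑ i, π i = 1 := by
    have h := sum_one_sub_smul_mulVec_of_mem_colStochastic hA (1 - m) π
    rw [hBπ, Finset.sum_const, Finset.card_univ, Fintype.card_fin, nsmul_eq_mul,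
      mul_div_cancel₀ _ (Nat.cast_ne_zero.2 (by omega)), sub_sub_cancel] at h
    exact mul_left_cancel₀ hm0.ne' ((mul_one m).trans h).symm
  have hfix : ∀ y, ∑ i, y i = 1 → (M *ᵥ y = y ↔ B *ᵥ y = fun _ => m / n) := fun y hy => by
    rw [hM, smul_add_smul_allOnes_mulVec_eq_self_iff, hy, mul_one]
  refine ⟨hB, ⟨(hfix π hsum).2 hBπ, hsum⟩, fun y hy hy1 => ?_⟩
  exact mulVec_injective_one_sub_smul_of_mem_colStochastic hA hc
    (((hfix y hy1).1 hy).trans hBπ.symm)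
end

section
/- Let W ∈ ℝ^{V×V} be a nonnegative row-stochastic matrix and Λ = I − diag(W), where diag(W) is the diagonal matrix of the diagonal entries of W. Assume that in the graph associated to W (edge (i,j) whenever W_{ij} > 0), for every node ℓ there exists a directed path from ℓ to some node i with W_{ii} > 0. Then ΛW is Schur stable, I − ΛW is invertible, and for every v ∈ ℝ^{V} the opinion dynamics x(k+1) = ΛW x(k) + (I − Λ) v with x(0) = v converges, as k → ∞, to x′ = (I − ΛW)^{-1} (I − Λ) v. -/
/-!
Write `A = ΛW`, so `A i j = (1 - W i i) * W i j`: `A` is nonnegative with row sums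
`1 - W i i ≤ 1`, and a row is strictly deficient exactly at the nodes with a self-loop.
A row-sum deficiency propagates backwards along the edges of the graph: if `A a c > 0` and
row `c` of `A ^ k` sums to less than one, then so does row `a` of `A ^ (k + 1)`. Nodes without
a self-loop keep all their edges in `A`, so the path hypothesis yields one power `A ^ N`
whose row sums are all `< 1`, i.e. `‖A ^ N‖_∞ < 1`. In a Banach algebra this bounds the
spectrum inside the unit disc, makes `1 - A` invertible and forces `A ^ k → 0`; the error
`x k - x′ = A ^ k (v - x′)` of the dynamics then tends to zero.
-/

open Matrix Filter Topology

section NormPow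

variable {R : Type*} [NormedRing R] [NormOneClass R]

lemma ne_zero_of_norm_pow_lt_one {a : R} {N : ℕ} (h : ‖a ^ N‖ < 1) : N ≠ 0 := by
  rintro rfl
  simp at h

lemma norm_pow_le_mul_norm_pow_div (a : R) {N : ℕ} (hN : N ≠ 0) (k : ℕ) :
    ‖a ^ k‖ ≤ (∑ r ∈ Finset.range N, ‖a ^ r‖) * ‖a ^ N‖ ^ (k / N) := by
  have hk : a ^ k = a ^ (k % N) * (a ^ N) ^ (k / N) := by
    rw [← pow_mul, ← pow_add, Nat.mod_add_div]
  calc ‖a ^ k‖ ≤ ‖a ^ (k % N)‖ * ‖a ^ N‖ ^ (k / N) := by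
        rw [hk]
        exact (norm_mul_le _ _).trans (by gcongr; exact norm_pow_le _ _)
    _ ≤ (∑ r ∈ Finset.range N, ‖a ^ r‖) * ‖a ^ N‖ ^ (k / N) := by
        gcongr
        exact Finset.single_le_sum (f := fun r => ‖a ^ r‖) (fun _ _ => norm_nonneg _)
          (Finset.mem_range.2 (Nat.mod_lt k (Nat.pos_of_ne_zero hN)))

lemma tendsto_pow_atTop_nhds_zero_of_norm_pow_lt_one {a : R} {N : ℕ} (h : ‖a ^ N‖ < 1) :
    Tendsto (fun k => a ^ k) atTop (𝓝 0) := by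
  have hN := ne_zero_of_norm_pow_lt_one h
  refine squeeze_zero_norm (norm_pow_le_mul_norm_pow_div a hN) ?_
  simpa using ((tendsto_pow_atTop_nhds_zero_of_lt_one (norm_nonneg _) h).comp
    (Nat.tendsto_div_const_atTop hN)).const_mul (∑ r ∈ Finset.range N, ‖a ^ r‖)

lemma spectrum.norm_lt_one_of_norm_pow_lt_one {𝕜 : Type*} [NormedField 𝕜] [NormedAlgebra 𝕜 R]
    [CompleteSpace R] {a : R} {N : ℕ} (h : ‖a ^ N‖ < 1) {μ : 𝕜} (hμ : μ ∈ spectrum 𝕜 a) :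
    ‖μ‖ < 1 := by
  have hμN : ‖μ‖ ^ N < 1 :=
    (norm_pow μ N ▸ spectrum.norm_le_norm_of_mem (spectrum.pow_mem_pow a N hμ)).trans_lt h
  exact (pow_lt_one_iff_of_nonneg (norm_nonneg μ) (ne_zero_of_norm_pow_lt_one h)).1 hμN

end NormPow

namespace Matrix

section RowSums

variable {n : Type*} [Fintype n] {A B : Matrix n n ℝ}

lemma sum_row_mul (A B : Matrix n n ℝ) (i : n) :
    ∑ j, (A * B) i j = ∑ l, A i l * ∑ j, B l j := by
  simp only [mul_apply, Finset.mul_sum]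
  exact Finset.sum_comm

lemma sum_row_mul_le (hA : ∀ i j, 0 ≤ A i j) (hB : ∀ l, ∑ j, B l j ≤ 1) (i : n) :
    ∑ j, (A * B) i j ≤ ∑ j, A i j := by
  rw [sum_row_mul]
  exact Finset.sum_le_sum fun l _ => mul_le_of_le_one_right (hA i l) (hB l)

lemma sum_row_mul_lt_one (hA : ∀ i j, 0 ≤ A i j) (hA₁ : ∀ i, ∑ j, A i j ≤ 1)
    (hB : ∀ l, ∑ j, B l j ≤ 1) {i c : n} (hic : 0 < A i c) (hc : ∑ j, B c j < 1) :
    ∑ j, (A * B) i j < 1 := by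
  rw [sum_row_mul]
  calc ∑ l, A i l * ∑ j, B l j < ∑ l, A i l :=
        Finset.sum_lt_sum (fun l _ => mul_le_of_le_one_right (hA i l) (hB l))
          ⟨c, Finset.mem_univ c, mul_lt_of_lt_one_right hic hc⟩
    _ ≤ 1 := hA₁ i

variable [DecidableEq n] (hA : ∀ i j, 0 ≤ A i j) (hA₁ : ∀ i, ∑ j, A i j ≤ 1)
include hA hA₁

lemma sum_row_pow_le_one (k : ℕ) (i : n) : ∑ j, (A ^ k) i j ≤ 1 := by
  induction k generalizing i with
  | zero => simp [one_apply]
  | succ k ih => rw [pow_succ']; exact (sum_row_mul_le hA ih i).trans (hA₁ i)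

lemma sum_row_pow_antitone (i : n) : Antitone fun k => ∑ j, (A ^ k) i j := by
  intro k m hkm
  dsimp only
  rw [← pow_mul_pow_sub A hkm]
  exact sum_row_mul_le (pow_apply_nonneg hA k) (sum_row_pow_le_one hA hA₁ _) i

lemma exists_sum_row_pow_lt_one_of_reflTransGen {ℓ i : n}
    (hpath : Relation.ReflTransGen (fun a b => 0 < A a b) ℓ i) (hi : ∑ j, A i j < 1) :
    ∃ k, ∑ j, (A ^ k) ℓ j < 1 := by
  induction hpath using Relation.ReflTransGen.head_induction_on with
  | refl => exact ⟨1, by simpa using hi⟩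
  | head hac _ ih =>
    obtain ⟨k, hk⟩ := ih
    exact ⟨k + 1, pow_succ' A k ▸
      sum_row_mul_lt_one hA hA₁ (sum_row_pow_le_one hA hA₁ k) hac hk⟩

lemma exists_forall_sum_row_pow_lt_one (hleak : ∀ ℓ, ∃ k, ∑ j, (A ^ k) ℓ j < 1) :
    ∃ N, ∀ i, ∑ j, (A ^ N) i j < 1 := by
  choose k hk using hleak
  exact ⟨Finset.univ.sup k, fun i =>
    (sum_row_pow_antitone hA hA₁ i (Finset.le_sup (Finset.mem_univ i))).trans_lt (hk i)⟩

end RowSums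

section LinftyOp

attribute [local instance] Matrix.linftyOpNormedAddCommGroup Matrix.linftyOpNormedRing
  Matrix.linftyOpNormedAlgebra

variable {n : Type*} [Fintype n]

lemma linfty_opNorm_lt_one_of_sum_row_lt_one {B : Matrix n n ℝ} (hB : ∀ i j, 0 ≤ B i j)
    (hB₁ : ∀ i, ∑ j, B i j < 1) : ‖B‖ < 1 := by
  rw [linfty_opNorm_def, ← NNReal.coe_one, NNReal.coe_lt_coe, Finset.sup_lt_iff one_pos]
  intro i _
  rw [← NNReal.coe_lt_coe]
  simpa [Real.norm_of_nonneg (hB i _)] using hB₁ i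

lemma linfty_opNorm_map_ofReal (B : Matrix n n ℝ) : ‖B.map ((↑) : ℝ → ℂ)‖ = ‖B‖ := by
  simp only [linfty_opNorm_def, map_apply, Complex.nnnorm_real]

variable [DecidableEq n] {A : Matrix n n ℝ}
  (hA : ∀ i j, 0 ≤ A i j) (hA₁ : ∀ i, ∑ j, A i j ≤ 1)
  (hleak : ∀ ℓ, ∃ k, ∑ j, (A ^ k) ℓ j < 1)
include hA hA₁ hleak

lemma exists_linfty_opNorm_pow_lt_one : ∃ N, ‖A ^ N‖ < 1 := by
  obtain ⟨N, hN⟩ := exists_forall_sum_row_pow_lt_one hA hA₁ hleak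
  exact ⟨N, linfty_opNorm_lt_one_of_sum_row_lt_one (pow_apply_nonneg hA N) hN⟩

variable [Nonempty n]

theorem norm_lt_one_of_mem_spectrum_map_ofReal {μ : ℂ}
    (hμ : μ ∈ spectrum ℂ (A.map ((↑) : ℝ → ℂ))) : ‖μ‖ < 1 := by
  obtain ⟨N, hN⟩ := exists_linfty_opNorm_pow_lt_one hA hA₁ hleak
  have hmap : A.map ((↑) : ℝ → ℂ) ^ N = (A ^ N).map (↑) :=
    (map_pow Complex.ofRealHom.mapMatrix A N).symm
  refine spectrum.norm_lt_one_of_norm_pow_lt_one (N := N) ?_ hμ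
  rwa [hmap, linfty_opNorm_map_ofReal]

theorem isUnit_one_sub_of_sum_row_pow_lt_one : IsUnit (1 - A) := by
  obtain ⟨N, hN⟩ := exists_linfty_opNorm_pow_lt_one hA hA₁ hleak
  by_contra hsingular
  have h1 : (1 : ℝ) ∈ spectrum ℝ A := by rwa [spectrum.mem_iff, map_one]
  simpa using spectrum.norm_lt_one_of_norm_pow_lt_one hN h1

theorem tendsto_pow_atTop_nhds_zero_of_sum_row_pow_lt_one :
    Tendsto (fun k => A ^ k) atTop (𝓝 0) :=
  have ⟨_, hN⟩ := exists_linfty_opNorm_pow_lt_one hA hA₁ hleak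
  tendsto_pow_atTop_nhds_zero_of_norm_pow_lt_one hN

end LinftyOp

lemma tendsto_of_affine_recurrence {n R : Type*} [Fintype n] [DecidableEq n] [CommRing R]
    [TopologicalSpace R] [IsTopologicalRing R] {A : Matrix n n R} (hunit : IsUnit (1 - A))
    (hpow : Tendsto (fun k => A ^ k) atTop (𝓝 0)) {b : n → R} {x : ℕ → n → R}
    (hx : ∀ k, x (k + 1) = A *ᵥ x k + b) :
    Tendsto x atTop (𝓝 ((1 - A)⁻¹ *ᵥ b)) := by
  set y := (1 - A)⁻¹ *ᵥ b
  have hfix : A *ᵥ y + b = y := by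
    have hy : (1 - A) *ᵥ y = b := by
      rw [mulVec_mulVec, mul_nonsing_inv _ ((isUnit_iff_isUnit_det _).1 hunit), one_mulVec]
    rw [← hy, sub_mulVec, one_mulVec, add_sub_cancel]
  have herr : ∀ k, x k = A ^ k *ᵥ (x 0 - y) + y := by
    intro k
    induction k with
    | zero => simp
    | succ k ih => rw [hx, ih, mulVec_add, add_assoc, hfix, mulVec_mulVec, ← pow_succ']
  have hlim := ((continuous_id.matrix_mulVec continuous_const).tendsto' (0 : Matrix n n R) 0
    (zero_mulVec (x 0 - y))).comp hpow
  simpa [← herr] using hlim.add_const y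

end Matrix

section FriedkinJohnsen

variable {n : Type*} [Fintype n] [DecidableEq n] {W : Matrix n n ℝ}

lemma one_sub_diagonal_mul_apply (W : Matrix n n ℝ) (i j : n) :
    ((1 - diagonal fun i => W i i) * W) i j = (1 - W i i) * W i j := by
  rw [← diagonal_one, diagonal_sub, diagonal_mul]

variable (hW : W ∈ rowStochastic ℝ n)
include hW

lemma one_sub_diagonal_mul_nonneg (i j : n) : 0 ≤ ((1 - diagonal fun i => W i i) * W) i j := by
  rw [one_sub_diagonal_mul_apply]
  exact mul_nonneg (sub_nonneg.2 (le_one_of_mem_rowStochastic hW)) (hW.1 i j)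

lemma sum_row_one_sub_diagonal_mul (i : n) :
    ∑ j, ((1 - diagonal fun i => W i i) * W) i j = 1 - W i i := by
  simp only [one_sub_diagonal_mul_apply, ← Finset.mul_sum, sum_row_of_mem_rowStochastic hW i,
    mul_one]

lemma exists_reflTransGen_one_sub_diagonal_mul {ℓ i : n}
    (hpath : Relation.ReflTransGen (fun a b => 0 < W a b) ℓ i) (hi : 0 < W i i) :
    ∃ i', Relation.ReflTransGen (fun a b => 0 < ((1 - diagonal fun i => W i i) * W) a b) ℓ i' ∧
      0 < W i' i' := by
  induction hpath using Relation.ReflTransGen.head_induction_on with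
  | refl => exact ⟨_, .refl, hi⟩
  | @head a c hac _ ih =>
    by_cases haa : 0 < W a a
    · exact ⟨a, .refl, haa⟩
    · obtain ⟨i', hci', hi'⟩ := ih
      have hWaa : W a a = 0 := le_antisymm (not_lt.1 haa) (hW.1 a a)
      refine ⟨i', .head ?_ hci', hi'⟩
      simpa [one_sub_diagonal_mul_apply, hWaa] using hac

end FriedkinJohnsen

/-- Friedkin–Johnsen opinion dynamics: if `W` is row-stochastic,
`Λ = I - diag(W)`, and in the graph associated to `W` every node has a
directed path to some node `i` with `W i i > 0`, then `ΛW` is Schur stable,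
`I - ΛW` is invertible, and for every prejudice vector `v` the dynamics
`x(k+1) = ΛW x(k) + (I-Λ)v`, `x(0) = v`, converges to
`x′ = (I - ΛW)⁻¹ (I - Λ) v`. -/
theorem stmt9 {V : Type*} [Fintype V] [DecidableEq V]
    (hV : 3 ≤ Fintype.card V)
    (W : Matrix V V ℝ)
    (hnonneg : ∀ i j, 0 ≤ W i j) (hrow : ∀ i, ∑ j, W i j = 1)
    (Λ : Matrix V V ℝ) (hΛ : Λ = 1 - Matrix.diagonal (fun i => W i i))
    (hpath : ∀ ℓ : V, ∃ i : V,
      Relation.ReflTransGen (fun a b => 0 < W a b) ℓ i ∧ 0 < W i i) :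
    (∀ μ ∈ spectrum ℂ ((Λ * W).map Complex.ofReal), ‖μ‖ < 1) ∧
    IsUnit (1 - Λ * W) ∧
    (∀ (v : V → ℝ) (x : ℕ → V → ℝ), x 0 = v →
      (∀ k, x (k + 1) = (Λ * W).mulVec (x k) + (1 - Λ).mulVec v) →
      Tendsto x atTop (nhds ((1 - Λ * W)⁻¹.mulVec ((1 - Λ).mulVec v)))) := by
  have : Nonempty V := Fintype.card_pos_iff.1 (by omega)
  have hW : W ∈ rowStochastic ℝ V := mem_rowStochastic_iff_sum.2 ⟨hnonneg, hrow⟩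
  subst hΛ
  set A := (1 - diagonal fun i => W i i) * W
  have hA : ∀ i j, 0 ≤ A i j := one_sub_diagonal_mul_nonneg hW
  have hA₁ (i : V) : ∑ j, A i j ≤ 1 := by
    rw [sum_row_one_sub_diagonal_mul hW]
    linarith [hnonneg i i]
  have hleak (ℓ : V) : ∃ k, ∑ j, (A ^ k) ℓ j < 1 := by
    obtain ⟨i, hℓi, hi⟩ := hpath ℓ
    obtain ⟨i', hℓi', hi'⟩ := exists_reflTransGen_one_sub_diagonal_mul hW hℓi hi
    refine exists_sum_row_pow_lt_one_of_reflTransGen hA hA₁ hℓi' ?_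
    rw [sum_row_one_sub_diagonal_mul hW]
    linarith
  have hunit := isUnit_one_sub_of_sum_row_pow_lt_one hA hA₁ hleak
  exact ⟨fun μ => norm_lt_one_of_mem_spectrum_map_ofReal hA hA₁ hleak, hunit,
    fun v x _ hx => tendsto_of_affine_recurrence hunit
      (tendsto_pow_atTop_nhds_zero_of_sum_row_pow_lt_one hA hA₁ hleak) hx⟩
end
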